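/- arXiv:1509.05712 — 4 statements merged into one kernel-verified Lean document; each statement's English description precedes it below -/
import Mathlib

section
/- Let L > 0 and ν > 0. Let m : ℝ → ℝ³ be twice continuously differentiable on [0, L] with ‖m(x)‖₂ = 1 for all x ∈ [0, L] and satisfying the Neumann boundary conditions m′(0) = m′(L) = 0. Then m satisfies the equilibrium equation m(x) × m″(x) − ν · (m(x) × (m(x) × m″(x))) = 0 for all x ∈ [0, L] if and only if m is constant on [0, L], i.e. there exists a ∈ ℝ³ with ‖a‖₂ = 1 such that m(x) = a for all x ∈ [0, L]. -/
/-! An equilibrium satisfies `m × m'' = 0`: dotting the equation with `c = m × m''` leaves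
`c ⬝ c = 0`. Hence `m''` is parallel to the unit vector `m`, and so orthogonal to `m'`, which is
itself orthogonal to `m` because `‖m‖` is constant. Then `‖m'‖²` is constant on `[0, L]`; it
vanishes at the Neumann endpoint `0`, so `m' ≡ 0` and `m` is constant. -/

open Matrix Set

section CrossProduct

variable {R : Type*} [CommRing R]

theorem eq_smul_of_cross_eq_zero {u v : Fin 3 → R} (hu : u ⬝ᵥ u = 1) (h : u ⨯₃ v = 0) :
    v = (u ⬝ᵥ v) • u := by
  have := cross_cross_eq_smul_sub_smul' u u v
  rw [h, map_zero, hu, one_smul] at this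
  exact (sub_eq_zero.1 this.symm).symm

theorem cross_sub_smul_cross_cross_eq_zero_iff [LinearOrder R] [IsStrictOrderedRing R]
    (ν : R) (u v : Fin 3 → R) :
    u ⨯₃ v - ν • (u ⨯₃ (u ⨯₃ v)) = 0 ↔ u ⨯₃ v = 0 := by
  constructor
  · intro h
    set c := u ⨯₃ v
    have hc : c = ν • (u ⨯₃ c) := sub_eq_zero.1 h
    have hcc : c ⬝ᵥ c = 0 :=
      calc c ⬝ᵥ c = c ⬝ᵥ ν • (u ⨯₃ c) := congrArg _ hc
        _ = 0 := by rw [dotProduct_smul, dot_cross_self, smul_zero]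
    exact dotProduct_self_eq_zero.1 hcc
  · intro h
    simp [h]

end CrossProduct

section Calculus

variable {E : Type*} [NormedAddCommGroup E] [NormedSpace ℝ E] {s : Set ℝ} {x y : ℝ}

theorem HasDerivWithinAt.eq_zero_of_eqOn_const {f : ℝ → E} {f' c : E}
    (hf : HasDerivWithinAt f f' s x) (hs : UniqueDiffWithinAt ℝ s x) (hc : EqOn f (fun _ ↦ c) s)
    (hx : x ∈ s) : f' = 0 :=
  hs.eq_deriv s hf ((hasDerivWithinAt_const x s c).congr hc (hc hx))

theorem Convex.eq_of_hasDerivWithinAt_zero {f : ℝ → E} (hs : Convex ℝ s)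
    (hf : ∀ x ∈ s, HasDerivWithinAt f 0 s x) (hx : x ∈ s) (hy : y ∈ s) : f x = f y := by
  have := norm_image_sub_le_of_norm_hasDerivWithin_le hf (fun _ _ ↦ norm_zero.le) hs hy hx
  rwa [zero_mul, norm_le_zero_iff, sub_eq_zero] at this

variable {ι : Type*} [Fintype ι] {f g f' : ℝ → ι → ℝ}

theorem HasDerivWithinAt.dotProduct {f'₀ g'₀ : ι → ℝ} (hf : HasDerivWithinAt f f'₀ s x)
    (hg : HasDerivWithinAt g g'₀ s x) :
    HasDerivWithinAt (fun y ↦ f y ⬝ᵥ g y) (f'₀ ⬝ᵥ g x + f x ⬝ᵥ g'₀) s x := by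
  rw [_root_.dotProduct, _root_.dotProduct, ← Finset.sum_add_distrib]
  exact HasDerivWithinAt.fun_sum fun i _ ↦
    (hasDerivWithinAt_pi.1 hf i).mul (hasDerivWithinAt_pi.1 hg i)

theorem dotProduct_deriv_eq_zero_of_dotProduct_self_eq {c : ℝ}
    (hf : ∀ x ∈ s, HasDerivWithinAt f (f' x) s x) (hs : UniqueDiffOn ℝ s)
    (hc : ∀ x ∈ s, f x ⬝ᵥ f x = c) (hx : x ∈ s) : f x ⬝ᵥ f' x = 0 := by
  have := ((hf x hx).dotProduct (hf x hx)).eq_zero_of_eqOn_const (hs x hx) hc hx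
  rw [dotProduct_comm] at this
  linarith

theorem eqOn_zero_of_dotProduct_deriv_eq_zero {x₀ : ℝ} (hs : Convex ℝ s)
    (hf : ∀ x ∈ s, HasDerivWithinAt f (f' x) s x) (horth : ∀ x ∈ s, f x ⬝ᵥ f' x = 0)
    (hx₀ : x₀ ∈ s) (h₀ : f x₀ = 0) : EqOn f 0 s := by
  intro x hx
  have hderiv : ∀ y ∈ s, HasDerivWithinAt (fun y ↦ f y ⬝ᵥ f y) 0 s y := fun y hy ↦
    ((hf y hy).dotProduct (hf y hy)).congr_deriv <| by rw [dotProduct_comm, horth y hy, add_zero]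
  have := hs.eq_of_hasDerivWithinAt_zero hderiv hx hx₀
  rw [h₀, dotProduct_zero] at this
  exact dotProduct_self_eq_zero.1 this

end Calculus

theorem landau_lifshitz_equilibria_general (L ν : ℝ) (hL : 0 < L)
    (m m' m'' : ℝ → Fin 3 → ℝ)
    (hm : ∀ x ∈ Icc (0 : ℝ) L, HasDerivWithinAt m (m' x) (Icc (0 : ℝ) L) x)
    (hm' : ∀ x ∈ Icc (0 : ℝ) L, HasDerivWithinAt m' (m'' x) (Icc (0 : ℝ) L) x)
    (hnorm : ∀ x ∈ Icc (0 : ℝ) L, Real.sqrt (∑ i, m x i ^ 2) = 1)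
    (hbc0 : m' 0 = 0) :
    (∀ x ∈ Icc (0 : ℝ) L,
        (m x) ⨯₃ (m'' x) - ν • ((m x) ⨯₃ ((m x) ⨯₃ (m'' x))) = 0)
      ↔ ∃ a : Fin 3 → ℝ, Real.sqrt (∑ i, a i ^ 2) = 1 ∧ ∀ x ∈ Icc (0 : ℝ) L, m x = a := by
  have hs : UniqueDiffOn ℝ (Icc 0 L) := uniqueDiffOn_Icc hL
  have h₀ : (0 : ℝ) ∈ Icc 0 L := left_mem_Icc.2 hL.le
  constructor
  · intro heq
    have hunit : ∀ x ∈ Icc 0 L, m x ⬝ᵥ m x = 1 := fun x hx ↦ by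
      simpa only [dotProduct, ← sq, Real.sqrt_eq_one] using hnorm x hx
    have hm'm'' : ∀ x ∈ Icc 0 L, m' x ⬝ᵥ m'' x = 0 := fun x hx ↦ by
      have hcross := (cross_sub_smul_cross_cross_eq_zero_iff ν _ _).1 (heq x hx)
      rw [eq_smul_of_cross_eq_zero (hunit x hx) hcross, dotProduct_smul, dotProduct_comm (m' x),
        dotProduct_deriv_eq_zero_of_dotProduct_self_eq hm hs hunit hx, smul_zero]
    have hm'0 := eqOn_zero_of_dotProduct_deriv_eq_zero (convex_Icc 0 L) hm' hm'm'' h₀ hbc0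
    refine ⟨m 0, hnorm 0 h₀, fun x hx ↦ (convex_Icc 0 L).eq_of_hasDerivWithinAt_zero ?_ hx h₀⟩
    exact fun y hy ↦ (hm y hy).congr_deriv (hm'0 hy)
  · rintro ⟨a, -, hconst⟩ x hx
    have hm'0 : ∀ y ∈ Icc 0 L, m' y = 0 := fun y hy ↦
      (hm y hy).eq_zero_of_eqOn_const (hs y hy) hconst hy
    have hm''0 : m'' x = 0 := (hm' x hx).eq_zero_of_eqOn_const (hs x hx) hm'0 hx
    rw [cross_sub_smul_cross_cross_eq_zero_iff, hm''0, map_zero]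

/-- The equilibria of the Landau–Lifshitz equation on `[0, L]` with Neumann boundary
conditions and saturation constraint `‖m(x)‖₂ = 1` are exactly the constant maps
`m(x) = a` with `‖a‖₂ = 1`. -/
theorem landau_lifshitz_equilibria (L ν : ℝ) (hL : 0 < L) (hν : 0 < ν)
    (m m' m'' : ℝ → Fin 3 → ℝ)
    (hm : ∀ x ∈ Icc (0 : ℝ) L, HasDerivWithinAt m (m' x) (Icc (0 : ℝ) L) x)
    (hm' : ∀ x ∈ Icc (0 : ℝ) L, HasDerivWithinAt m' (m'' x) (Icc (0 : ℝ) L) x)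
    (hm'' : ContinuousOn m'' (Icc (0 : ℝ) L))
    (hnorm : ∀ x ∈ Icc (0 : ℝ) L, Real.sqrt (∑ i, m x i ^ 2) = 1)
    (hbc0 : m' 0 = 0) (hbcL : m' L = 0) :
    (∀ x ∈ Icc (0 : ℝ) L,
        (m x) ⨯₃ (m'' x) - ν • ((m x) ⨯₃ ((m x) ⨯₃ (m'' x))) = 0)
      ↔ ∃ a : Fin 3 → ℝ, Real.sqrt (∑ i, a i ^ 2) = 1 ∧ ∀ x ∈ Icc (0 : ℝ) L, m x = a :=
  landau_lifshitz_equilibria_general L ν hL m m' m'' hm hm' hnorm hbc0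
end

section
/- Let I ⊆ ℝ be an open interval and let m : ℝ → ℝ³ be twice continuously differentiable on I with ‖m(x)‖₂ = 1 for all x ∈ I and m(x) × m″(x) = 0 for all x ∈ I. Then m″(x) = −‖m′(x)‖₂² · m(x) for all x ∈ I, and the function x ↦ ‖m′(x)‖₂² is constant on I. -/
/-!
Differentiating `m ⬝ᵥ m = 1` gives `m ⬝ᵥ m′ = 0`, and differentiating once more
`m ⬝ᵥ m″ = -(m′ ⬝ᵥ m′)`. Since `m × m″ = 0` and `m` is a unit vector, the vector triple product
expansion of `m × (m × m″)` gives `m″ = (m ⬝ᵥ m″) • m`. Finally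
`(m′ ⬝ᵥ m′)′ = 2 m′ ⬝ᵥ m″ = -2 (m′ ⬝ᵥ m′) (m′ ⬝ᵥ m) = 0`.
-/

open Matrix Set

theorem HasDerivAt.dotProduct {𝕜 ι : Type*} [NontriviallyNormedField 𝕜] [Fintype ι]
    {f g : 𝕜 → ι → 𝕜} {f' g' : ι → 𝕜} {x : 𝕜}
    (hf : HasDerivAt f f' x) (hg : HasDerivAt g g' x) :
    HasDerivAt (fun y => f y ⬝ᵥ g y) (f' ⬝ᵥ g x + f x ⬝ᵥ g') x := by
  unfold _root_.dotProduct
  rw [← Finset.sum_add_distrib]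
  exact .fun_sum fun i _ => (hasDerivAt_pi.1 hf i).fun_mul (hasDerivAt_pi.1 hg i)

theorem HasDerivAt.eq_zero_of_eqOn_const {𝕜 F : Type*} [NontriviallyNormedField 𝕜]
    [NormedAddCommGroup F] [NormedSpace 𝕜 F] {f : 𝕜 → F} {f' c : F} {s : Set 𝕜} {x : 𝕜}
    (h : HasDerivAt f f' x) (hs : IsOpen s) (hf : EqOn f (fun _ => c) s) (hx : x ∈ s) :
    f' = 0 :=
  h.unique ((hasDerivAt_const x c).congr_of_eventuallyEq (hf.eventuallyEq_of_mem (hs.mem_nhds hx)))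

theorem eq_dotProduct_smul_of_cross_eq_zero {R : Type*} [CommRing R] {v w : Fin 3 → R}
    (hv : v ⬝ᵥ v = 1) (h : v ⨯₃ w = 0) : w = (v ⬝ᵥ w) • v := by
  have := cross_cross_eq_smul_sub_smul' v v w
  rwa [h, map_zero, hv, one_smul, eq_comm, sub_eq_zero, eq_comm] at this

theorem second_deriv_parallel_of_cross_eq_zero_general (a b : ℝ) (m m' m'' : ℝ → Fin 3 → ℝ)
    (hm : ∀ x ∈ Ioo a b, HasDerivAt m (m' x) x)
    (hm' : ∀ x ∈ Ioo a b, HasDerivAt m' (m'' x) x)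
    (hnorm : ∀ x ∈ Ioo a b, Real.sqrt (∑ i, m x i ^ 2) = 1)
    (hcross : ∀ x ∈ Ioo a b, (m x) ⨯₃ (m'' x) = 0) :
    (∀ x ∈ Ioo a b, m'' x = -(∑ i, m' x i ^ 2) • m x) ∧
      (∀ x ∈ Ioo a b, ∀ y ∈ Ioo a b, ∑ i, m' x i ^ 2 = ∑ i, m' y i ^ 2) := by
  have hsq (v : Fin 3 → ℝ) : ∑ i, v i ^ 2 = v ⬝ᵥ v := by simp only [dotProduct, sq]
  simp only [hsq] at hnorm ⊢
  have hunit : ∀ x ∈ Ioo a b, m x ⬝ᵥ m x = 1 := fun x hx => Real.sqrt_eq_one.1 (hnorm x hx)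
  have horth : ∀ x ∈ Ioo a b, m x ⬝ᵥ m' x = 0 := fun x hx => by
    have := ((hm x hx).dotProduct (hm x hx)).eq_zero_of_eqOn_const isOpen_Ioo hunit hx
    rw [dotProduct_comm (m' x)] at this
    linarith
  have hkey : ∀ x ∈ Ioo a b, m x ⬝ᵥ m'' x = -(m' x ⬝ᵥ m' x) := fun x hx => by
    have := ((hm x hx).dotProduct (hm' x hx)).eq_zero_of_eqOn_const isOpen_Ioo horth hx
    linarith
  have hpar : ∀ x ∈ Ioo a b, m'' x = -(m' x ⬝ᵥ m' x) • m x := fun x hx => by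
    rw [← hkey x hx]
    exact eq_dotProduct_smul_of_cross_eq_zero (hunit x hx) (hcross x hx)
  have henergy : ∀ x ∈ Ioo a b, HasDerivAt (fun y => m' y ⬝ᵥ m' y) 0 x := fun x hx => by
    have := (hm' x hx).dotProduct (hm' x hx)
    rwa [hpar x hx, smul_dotProduct, dotProduct_smul, dotProduct_comm (m' x) (m x), horth x hx,
      smul_zero, add_zero] at this
  refine ⟨hpar, fun x hx y hy => isOpen_Ioo.is_const_of_deriv_eq_zero isPreconnected_Ioo
    (fun z hz => (henergy z hz).differentiableAt.differentiableWithinAt)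
    (fun z hz => (henergy z hz).deriv) hx hy⟩

/-- If `‖m(x)‖₂ = 1` and `m × m″ = 0` on an open interval, then
`m″ = -‖m′‖₂² m` there and `‖m′‖₂²` is constant on the interval. -/
theorem second_deriv_parallel_of_cross_eq_zero (a b : ℝ) (m m' m'' : ℝ → Fin 3 → ℝ)
    (hm : ∀ x ∈ Ioo a b, HasDerivAt m (m' x) x)
    (hm' : ∀ x ∈ Ioo a b, HasDerivAt m' (m'' x) x)
    (hm'' : ContinuousOn m'' (Ioo a b))
    (hnorm : ∀ x ∈ Ioo a b, Real.sqrt (∑ i, m x i ^ 2) = 1)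
    (hcross : ∀ x ∈ Ioo a b, (m x) ⨯₃ (m'' x) = 0) :
    (∀ x ∈ Ioo a b, m'' x = -(∑ i, m' x i ^ 2) • m x) ∧
      (∀ x ∈ Ioo a b, ∀ y ∈ Ioo a b, ∑ i, m' x i ^ 2 = ∑ i, m' y i ^ 2) :=
  second_deriv_parallel_of_cross_eq_zero_general a b m m' m'' hm hm' hnorm hcross
end

section
/- Let L > 0, ν > 0, and a ∈ ℝ³ with ‖a‖₂ = 1. For every n ∈ ℕ and every λ ∈ { −(nπ/L)² ν, −(nπ/L)² ν + i (nπ/L)², −(nπ/L)² ν − i (nπ/L)² }, there exists a twice continuously differentiable function v : ℝ → ℂ³, not identically zero on [0, L], with v′(0) = v′(L) = 0 and ν · v″(x) + a × v″(x) = λ · v(x) for all x ∈ [0, L]. -/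
/-!
The map `w ↦ a ⨯₃ w` is multiplication by the skew matrix `[a]ₓ`, and
`det (μ • 1 - [a]ₓ) = μ (μ² + a ⬝ᵥ a)`, so for a unit vector `a` each of `0, ±i` has a nonzero
eigenvector `w`. The Neumann mode `v x = cos (k x) • w` with `k = nπ/L` has `v'' = -k² v`, hence
`ν v'' + a ⨯₃ v'' = -k² (ν + μ) v`.
-/

open Matrix Set

section CrossEigen

variable {R : Type*} [CommRing R]

def crossMatrix (a : Fin 3 → R) : Matrix (Fin 3) (Fin 3) R :=
  !![0, -a 2, a 1; a 2, 0, -a 0; -a 1, a 0, 0]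

theorem crossMatrix_mulVec (a w : Fin 3 → R) : crossMatrix a *ᵥ w = a ⨯₃ w := by
  ext i; fin_cases i <;> simp [crossMatrix, cross_apply, mulVec, vecHead, vecTail] <;> ring

theorem det_smul_one_sub_crossMatrix (μ : R) (a : Fin 3 → R) :
    (μ • 1 - crossMatrix a).det = μ * (μ ^ 2 + a ⬝ᵥ a) := by
  simp [det_fin_three, crossMatrix, vec3_dotProduct, one_apply]; ring

theorem exists_cross_eq_smul [IsDomain R] {a : Fin 3 → R} {μ : R}
    (hμ : μ * (μ ^ 2 + a ⬝ᵥ a) = 0) : ∃ w ≠ 0, a ⨯₃ w = μ • w := by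
  obtain ⟨w, hw, hker⟩ :=
    exists_mulVec_eq_zero_iff.2 ((det_smul_one_sub_crossMatrix μ a).trans hμ)
  refine ⟨w, hw, ?_⟩
  rw [sub_mulVec, smul_mulVec, one_mulVec, crossMatrix_mulVec, sub_eq_zero] at hker
  exact hker.symm

end CrossEigen

section CosineMode

variable {E : Type*} [NormedAddCommGroup E] [NormedSpace ℝ E]

theorem hasDerivAt_cos_mul_smul (k : ℝ) (w : E) (x : ℝ) :
    HasDerivAt (fun x => Real.cos (k * x) • w) (-(k * Real.sin (k * x)) • w) x := by
  have := ((hasDerivAt_id x).const_mul k).cos.smul_const w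
  simpa [mul_comm] using this

theorem hasDerivAt_neg_mul_sin_mul_smul (k : ℝ) (w : E) (x : ℝ) :
    HasDerivAt (fun x => -(k * Real.sin (k * x)) • w) (-(k ^ 2 * Real.cos (k * x)) • w) x := by
  have := (((hasDerivAt_id x).const_mul k).sin.const_mul k).neg.smul_const w
  convert this using 2
  · rfl
  · simp only [id]; ring

end CosineMode

theorem smul_add_cross_real_smul_of_cross_eq_smul {a w : Fin 3 → ℂ} {μ : ℂ}
    (hw : a ⨯₃ w = μ • w) (ν c : ℝ) :
    (ν : ℂ) • (c • w) + a ⨯₃ (c • w) = ((c : ℂ) * (ν + μ)) • w := by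
  rw [LinearMap.map_smul_of_tower, hw, ← Complex.coe_smul, ← Complex.coe_smul, smul_smul,
    smul_smul, ← add_smul]
  congr 1
  ring

theorem linearized_landau_lifshitz_eigenvalues_exist_general (L ν : ℝ) (hL : 0 < L)
    (a : Fin 3 → ℝ) (ha : Real.sqrt (∑ i, a i ^ 2) = 1) (n : ℕ) (lam : ℂ)
    (hlam : lam = -((((n : ℝ) * Real.pi / L) ^ 2 * ν : ℝ) : ℂ) ∨
      lam = -((((n : ℝ) * Real.pi / L) ^ 2 * ν : ℝ) : ℂ)
          + Complex.I * ((((n : ℝ) * Real.pi / L) ^ 2 : ℝ) : ℂ) ∨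
      lam = -((((n : ℝ) * Real.pi / L) ^ 2 * ν : ℝ) : ℂ)
          - Complex.I * ((((n : ℝ) * Real.pi / L) ^ 2 : ℝ) : ℂ)) :
    ∃ v v' v'' : ℝ → Fin 3 → ℂ,
      (∀ x ∈ Icc (0 : ℝ) L, HasDerivWithinAt v (v' x) (Icc (0 : ℝ) L) x) ∧
      (∀ x ∈ Icc (0 : ℝ) L, HasDerivWithinAt v' (v'' x) (Icc (0 : ℝ) L) x) ∧
      ContinuousOn v'' (Icc (0 : ℝ) L) ∧
      (¬ ∀ x ∈ Icc (0 : ℝ) L, v x = 0) ∧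
      v' 0 = 0 ∧ v' L = 0 ∧
      ∀ x ∈ Icc (0 : ℝ) L,
        (ν : ℂ) • v'' x + (fun i => (a i : ℂ)) ⨯₃ (v'' x) = lam • v x := by
  set k := (n : ℝ) * Real.pi / L
  have ha' : (fun i => (a i : ℂ)) ⬝ᵥ (fun i => (a i : ℂ)) = 1 := by
    rw [Real.sqrt_eq_one] at ha
    simp only [dotProduct, ← sq]
    exact_mod_cast ha
  obtain ⟨μ, hμ, hlam⟩ : ∃ μ : ℂ, μ * (μ ^ 2 + 1) = 0 ∧ lam = -((k ^ 2 : ℝ) : ℂ) * (ν + μ) := by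
    rcases hlam with rfl | rfl | rfl
    · exact ⟨0, by ring, by push_cast; ring⟩
    · exact ⟨-Complex.I, by rw [neg_sq, Complex.I_sq]; ring, by push_cast; ring⟩
    · exact ⟨Complex.I, by rw [Complex.I_sq]; ring, by push_cast; ring⟩
  obtain ⟨w, hw0, hw⟩ := exists_cross_eq_smul (ha' ▸ hμ)
  refine ⟨fun x => Real.cos (k * x) • w, fun x => -(k * Real.sin (k * x)) • w,
    fun x => -(k ^ 2 * Real.cos (k * x)) • w,
    fun x _ => (hasDerivAt_cos_mul_smul k w x).hasDerivWithinAt,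
    fun x _ => (hasDerivAt_neg_mul_sin_mul_smul k w x).hasDerivWithinAt,
    by fun_prop, fun h => hw0 (by simpa using h 0 ⟨le_rfl, hL.le⟩), by simp, ?_, fun x _ => ?_⟩
  · have hkL : k * L = n * Real.pi := div_mul_cancel₀ _ hL.ne'
    simp [hkL, Real.sin_nat_mul_pi]
  · dsimp only
    rw [smul_add_cross_real_smul_of_cross_eq_smul hw, hlam, ← Complex.coe_smul, smul_smul]
    congr 1
    push_cast
    ring

/-- For every `n ∈ ℕ`, each of `-(nπ/L)² ν`, `-(nπ/L)² ν + i (nπ/L)²` and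
`-(nπ/L)² ν - i (nπ/L)²` is an eigenvalue of the linearized Landau–Lifshitz operator
`A v = ν v″ + a × v″` on `[0, L]` with Neumann boundary conditions. -/
theorem linearized_landau_lifshitz_eigenvalues_exist (L ν : ℝ) (hL : 0 < L) (hν : 0 < ν)
    (a : Fin 3 → ℝ) (ha : Real.sqrt (∑ i, a i ^ 2) = 1) (n : ℕ) (lam : ℂ)
    (hlam : lam = -((((n : ℝ) * Real.pi / L) ^ 2 * ν : ℝ) : ℂ) ∨
      lam = -((((n : ℝ) * Real.pi / L) ^ 2 * ν : ℝ) : ℂ)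
          + Complex.I * ((((n : ℝ) * Real.pi / L) ^ 2 : ℝ) : ℂ) ∨
      lam = -((((n : ℝ) * Real.pi / L) ^ 2 * ν : ℝ) : ℂ)
          - Complex.I * ((((n : ℝ) * Real.pi / L) ^ 2 : ℝ) : ℂ)) :
    ∃ v v' v'' : ℝ → Fin 3 → ℂ,
      (∀ x ∈ Icc (0 : ℝ) L, HasDerivWithinAt v (v' x) (Icc (0 : ℝ) L) x) ∧
      (∀ x ∈ Icc (0 : ℝ) L, HasDerivWithinAt v' (v'' x) (Icc (0 : ℝ) L) x) ∧
      ContinuousOn v'' (Icc (0 : ℝ) L) ∧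
      (¬ ∀ x ∈ Icc (0 : ℝ) L, v x = 0) ∧
      v' 0 = 0 ∧ v' L = 0 ∧
      ∀ x ∈ Icc (0 : ℝ) L,
        (ν : ℂ) • v'' x + (fun i => (a i : ℂ)) ⨯₃ (v'' x) = lam • v x :=
  linearized_landau_lifshitz_eigenvalues_exist_general L ν hL a ha n lam hlam
end

section
/- Let c > 0 and y₀, y₁ ∈ ℝ, and for ω > 0 define y_ω(t) = y₀ + (y₁/c)(1 − e^{−ct}) − sin(ω t)/(ω² + c²) + (ω² + c² − c² cos(ω t) − ω² e^{−ct}) / (ω c (ω² + c²)). Then: (a) for every fixed t ≥ 0, y_ω(t) tends to y₀ + (y₁/c)(1 − e^{−ct}) as ω → 0⁺; and (b) y₀ + (y₁/c)(1 − e^{−ct}) tends to y₀ + y₁/c as t → ∞. -/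
open Filter Topology

/-- The response of `y″ + c y′ = sin ωt` to the forcing alone (zero initial data). -/
noncomputable def forcedResponse (c ω t : ℝ) : ℝ :=
  -(Real.sin (ω * t) / (ω ^ 2 + c ^ 2))
    + (ω ^ 2 + c ^ 2 - c ^ 2 * Real.cos (ω * t) - ω ^ 2 * Real.exp (-c * t)) /
        (ω * c * (ω ^ 2 + c ^ 2))

lemma tendsto_one_sub_cos_mul_div_nhdsNE (t : ℝ) :
    Tendsto (fun ω : ℝ => (1 - Real.cos (ω * t)) / ω) (𝓝[≠] 0) (𝓝 0) := by
  have h : HasDerivAt (fun ω : ℝ => 1 - Real.cos (ω * t)) 0 0 := by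
    simpa using ((Real.hasDerivAt_cos (0 * t)).comp 0 ((hasDerivAt_id 0).mul_const t)).const_sub 1
  exact (hasDerivAt_iff_tendsto_slope.mp h).congr fun ω => by simp [slope_def_field]

-- Isolates the difference quotient `(1 - cos (ω t)) / ω`, whose limit at `ω = 0` is a derivative, `0`.
lemma forcedResponse_eq {c ω : ℝ} (hc : c ≠ 0) (hω : ω ≠ 0) (t : ℝ) :
    forcedResponse c ω t = -(Real.sin (ω * t) / (ω ^ 2 + c ^ 2))
      + (ω * (1 - Real.exp (-c * t)) + c ^ 2 * ((1 - Real.cos (ω * t)) / ω)) /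
          (c * (ω ^ 2 + c ^ 2)) := by
  have hd : ω ^ 2 + c ^ 2 ≠ 0 := by positivity
  unfold forcedResponse
  field_simp
  ring

lemma tendsto_forcedResponse_nhdsNE {c : ℝ} (hc : c ≠ 0) (t : ℝ) :
    Tendsto (fun ω => forcedResponse c ω t) (𝓝[≠] 0) (𝓝 0) := by
  have hd : (0 : ℝ) ^ 2 + c ^ 2 ≠ 0 := by positivity
  have hcont : ∀ f : ℝ → ℝ, Continuous f → Tendsto f (𝓝[≠] 0) (𝓝 (f 0)) :=
    fun f hf => hf.continuousAt.tendsto.mono_left nhdsWithin_le_nhds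
  have hsin := hcont (fun ω => Real.sin (ω * t) / (ω ^ 2 + c ^ 2))
    (by fun_prop (disch := exact fun ω => by positivity))
  have hnum := (hcont (fun ω => ω * (1 - Real.exp (-c * t))) (by fun_prop)).add
    ((tendsto_one_sub_cos_mul_div_nhdsNE t).const_mul (c ^ 2))
  have hden := hcont (fun ω => c * (ω ^ 2 + c ^ 2)) (by fun_prop)
  have hlim := hsin.neg.add (hnum.div hden (mul_ne_zero hc hd))
  simp only [Real.sin_zero, zero_mul, zero_div, neg_zero, zero_add, mul_zero] at hlim
  refine hlim.congr' ?_
  filter_upwards [self_mem_nhdsWithin] with ω hω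
  exact (forcedResponse_eq hc hω t).symm

lemma tendsto_exp_neg_mul_atTop {c : ℝ} (hc : 0 < c) :
    Tendsto (fun t => Real.exp (-c * t)) atTop (𝓝 0) :=
  Real.tendsto_exp_atBot.comp (tendsto_id.const_mul_atTop_of_neg (neg_lt_zero.mpr hc))

/-- Zero-frequency limit of the solutions of `y″ + c y′ = sin ωt` with
`y(0) = y₀`, `y′(0) = y₁`: for fixed `t ≥ 0` the solution tends to
`y₀ + (y₁/c)(1 - e^{-ct})` as `ω → 0⁺`, and this limit tends to `y₀ + y₁/c`
as `t → ∞`. -/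
theorem zero_frequency_limit_depends_on_initial_conditions (c y₀ y₁ : ℝ) (hc : 0 < c)
    (y : ℝ → ℝ → ℝ)
    (hy : ∀ ω, 0 < ω → ∀ t, y ω t = y₀ + y₁ / c * (1 - Real.exp (-c * t))
        - Real.sin (ω * t) / (ω ^ 2 + c ^ 2)
        + (ω ^ 2 + c ^ 2 - c ^ 2 * Real.cos (ω * t) - ω ^ 2 * Real.exp (-c * t)) /
            (ω * c * (ω ^ 2 + c ^ 2))) :
    (∀ t, 0 ≤ t → Tendsto (fun ω => y ω t) (nhdsWithin 0 (Set.Ioi 0))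
        (nhds (y₀ + y₁ / c * (1 - Real.exp (-c * t))))) ∧
      Tendsto (fun t => y₀ + y₁ / c * (1 - Real.exp (-c * t))) atTop
        (nhds (y₀ + y₁ / c)) := by
  refine ⟨fun t _ => ?_, ?_⟩
  · have hforced := (tendsto_forcedResponse_nhdsNE hc.ne' t).mono_left
      (nhdsWithin_mono 0 fun ω (hω : 0 < ω) => hω.ne')
    rw [← add_zero (y₀ + _)]
    refine (tendsto_const_nhds.add hforced).congr' ?_
    filter_upwards [self_mem_nhdsWithin] with ω hω
    rw [hy ω hω t, forcedResponse]
    ring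
  · have hexp := tendsto_exp_neg_mul_atTop hc
    simpa using (tendsto_const_nhds (x := y₀)).add
      (((tendsto_const_nhds (x := (1 : ℝ))).sub hexp).const_mul (y₁ / c))
end
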